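/- Let H be a K3 crystal over W (of any finite rank) and let B be a B-field for H. Then the W-submodule e^B(H̃) ⊆ H̃ ⊗_W K is preserved by the semilinear extension of Φ̃ to H̃ ⊗_W K: Φ̃(e^B(H̃)) ⊆ e^B(H̃). -/

import Mathlib

open TensorProduct

section Crystal

/-- The submodule `pH` of a `W`-module `H`. -/
noncomputable def pMul (W : Type*) [CommRing W] (p : ℕ) (H : Type*) [AddCommGroup H]
    [Module W H] : Submodule W H :=
  LinearMap.range ((p : W) • (LinearMap.id : H →ₗ[W] H))

/-- A K3 crystal of rank `n` over `(W, σW)`: a free `W`-module `H` of rank `n` with a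
`σW`-semilinear map `Φ` and a perfect symmetric pairing `b` such that `p²H ⊆ Φ(H)`,
the image of `Φ` modulo `p` is one-dimensional, and `⟨Φx, Φy⟩ = p²·σW⟨x,y⟩`. -/
structure IsK3Crystal (p : ℕ) {W : Type*} [CommRing W] (σW : W →+* W) (n : ℕ)
    {H : Type*} [AddCommGroup H] [Module W H]
    (Φ : H →ₛₗ[σW] H) (b : LinearMap.BilinForm W H) : Prop where
  free : Module.Free W H
  rank_eq : Module.finrank W H = n
  p2_div : ∀ x : H, ∃ y : H, Φ y = ((p : W)) ^ 2 • x
  rank_le : ∃ h : H, ∀ x : H, ∃ c : W, Φ x - c • h ∈ pMul W p H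
  rank_ne : ∃ x : H, Φ x ∉ pMul W p H
  perfect : Function.Bijective b
  compat : ∀ x y : H, b (Φ x) (Φ y) = (p : W) ^ 2 * σW (b x y)

variable (p : ℕ) (W : Type*) [CommRing W] (K : Type*) [Field K] [Algebra W K]
variable (H : Type*) [AddCommGroup H] [Module W H]

/-- The image of `W` in `K`. -/
noncomputable def Wline : Submodule W K := LinearMap.range (Algebra.linearMap W K)

/-- The image of `H` in `H ⊗_W K`. -/
noncomputable def iotaH : Submodule W (K ⊗[W] H) :=
  LinearMap.range ((TensorProduct.mk W K H) (1 : K))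

/-- The Mukai lattice `H̃ = W ⊕ H ⊕ W` inside `H̃ ⊗ K = K × (H ⊗ K) × K`. -/
noncomputable def Htilde : Submodule W (K × (K ⊗[W] H) × K) :=
  (Wline W K).prod ((iotaH W K H).prod (Wline W K))

variable (σK : K →+* K) (ΦK : (K ⊗[W] H) →ₛₗ[σK] (K ⊗[W] H))

/-- The Mukai Frobenius `Φ̃(a,b,c) = (p·σ(a), Φ(b), p·σ(c))` on `H̃ ⊗ K`. -/
noncomputable def PhiTilde :
    (K × (K ⊗[W] H) × K) →ₛₗ[σK] (K × (K ⊗[W] H) × K) where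
  toFun x := ((p : K) * σK x.1, ΦK x.2.1, (p : K) * σK x.2.2)
  map_add' x y := by
    refine Prod.ext ?_ (Prod.ext ?_ ?_) <;>
      simp [Prod.fst_add, Prod.snd_add, map_add, mul_add]
  map_smul' c x := by
    refine Prod.ext ?_ (Prod.ext ?_ ?_)
    · simp only [Prod.smul_fst, Prod.smul_snd, smul_eq_mul, map_mul, RingHom.id_apply]
      ring
    · simp only [Prod.smul_fst, Prod.smul_snd, LinearMap.map_smulₛₗ]
    · simp only [Prod.smul_fst, Prod.smul_snd, smul_eq_mul, map_mul, RingHom.id_apply]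
      ring

/-- The B-field condition: `pB ∈ H` and `B - φ(B) ∈ H + φ(H)`, where `φ = p⁻¹Φ`. -/
def IsBField (B : K ⊗[W] H) : Prop :=
  (∃ x : H, (p : K) • B = (1 : K) ⊗ₜ[W] x) ∧
  (∃ x y : H, B - (p : K)⁻¹ • ΦK B =
    (1 : K) ⊗ₜ[W] x + (p : K)⁻¹ • ΦK ((1 : K) ⊗ₜ[W] y))

variable (b : LinearMap.BilinForm W H)

/-- The map `e^B (a,b,c) = (a, b + aB, c + ⟨b,B⟩ + a·B²/2)` on `H̃ ⊗ K`. -/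
noncomputable def eB (B : K ⊗[W] H) :
    (K × (K ⊗[W] H) × K) →ₗ[K] (K × (K ⊗[W] H) × K) where
  toFun x := (x.1, x.2.1 + x.1 • B,
    x.2.2 + (b.baseChange K) x.2.1 B + x.1 * ((b.baseChange K) B B / 2))
  map_add' x y := by
    refine Prod.ext ?_ (Prod.ext ?_ ?_)
    · simp [Prod.fst_add]
    · simp only [Prod.fst_add, Prod.snd_add, add_smul, Prod.fst, Prod.snd]
      abel
    · simp only [Prod.fst_add, Prod.snd_add, map_add, LinearMap.add_apply, add_mul,
        Prod.fst, Prod.snd]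
      ring
  map_smul' c x := by
    refine Prod.ext ?_ (Prod.ext ?_ ?_)
    · simp
    · simp only [Prod.smul_fst, Prod.smul_snd, smul_add, smul_smul, smul_eq_mul,
        RingHom.id_apply, Prod.fst, Prod.snd]
    · simp only [Prod.smul_fst, Prod.smul_snd, map_smul, LinearMap.smul_apply,
        smul_eq_mul, RingHom.id_apply, Prod.fst, Prod.snd]
      ring

/-- The twisted Mukai lattice `e^B(H̃) ⊆ H̃ ⊗ K`. -/
noncomputable def eBT (B : K ⊗[W] H) : Submodule W (K × (K ⊗[W] H) × K) :=
  (Htilde W K H).map (LinearMap.restrictScalars W (eB W K H b B))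

/-- The Mukai pairing `(a,b,c)·(a',b',c') = -ac' + ⟨b,b'⟩ - a'c` on `H̃ ⊗ K`. -/
noncomputable def mukaiP (x y : K × (K ⊗[W] H) × K) : K :=
  -(x.1 * y.2.2) + (b.baseChange K) x.2.1 y.2.1 - x.2.2 * y.1

/-- Scaling a `W`-submodule of `H̃ ⊗ K` by `p`. -/
noncomputable def pScale (T : Submodule W (K × (K ⊗[W] H) × K)) :
    Submodule W (K × (K ⊗[W] H) × K) :=
  T.map (LinearMap.restrictScalars W ((p : K) •
    (LinearMap.id : (K × (K ⊗[W] H) × K) →ₗ[K] (K × (K ⊗[W] H) × K))))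

end Crystal

/-!
Extending `⟨Φx, Φy⟩ = p²·σ⟨x, y⟩` to `H ⊗ K` gives `Φ̃ ∘ e^B = e^{φ(B)} ∘ Φ̃`, and symmetry of
the pairing gives `e^{φ(B)} = e^B ∘ e^D` with `D = φ(B) - B`. As `D ∈ H + φ(H)` for a B-field,
it remains to see that `e^D` maps `Φ̃(H̃)` into `H̃`. On `Φ̃(a, x, c) = (p·σa, Φx, p·σc)` the shift
adds `p·σa·D ∈ H` in the middle and `⟨Φx, D⟩ + p·σa·⟨D, D⟩/2` at the end; the `p⁻¹` in the
`φ(H)`-part of `D` is cancelled either by the factor `p²` that the pairing gains on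
`Φ(H) × Φ(H)` or by the outer `p`, and `2` is a unit in `W` because `p` is odd.
-/

namespace K3Crystal

variable {p : ℕ} {W : Type*} [CommRing W] {K : Type*} [Field K] [Algebra W K]
  {H : Type*} [AddCommGroup H] [Module W H]
  {σW : W →+* W} {σK : K →+* K} {Φ : H →ₛₗ[σW] H} {ΦK : K ⊗[W] H →ₛₗ[σK] K ⊗[W] H}
  {b : LinearMap.BilinForm W H}

lemma mem_Wline_iff {x : K} : x ∈ Wline W K ↔ x ∈ (⊥ : Subalgebra W K) := by
  simp only [Wline, LinearMap.mem_range, Algebra.linearMap_apply, Algebra.mem_bot,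
    Set.mem_range]

lemma tmul_mem_iotaH (x : H) : (1 : K) ⊗ₜ[W] x ∈ iotaH W K H := ⟨x, rfl⟩

lemma smul_mem_iotaH {r : K} (hr : r ∈ (⊥ : Subalgebra W K)) {X : K ⊗[W] H}
    (hX : X ∈ iotaH W K H) : r • X ∈ iotaH W K H := by
  obtain ⟨w, rfl⟩ := Algebra.mem_bot.mp hr
  rw [algebraMap_smul]
  exact Submodule.smul_mem _ w hX

lemma baseChange_mem_bot {X Y : K ⊗[W] H}
    (hX : X ∈ iotaH W K H) (hY : Y ∈ iotaH W K H) :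
    b.baseChange K X Y ∈ (⊥ : Subalgebra W K) := by
  obtain ⟨x, rfl⟩ := hX
  obtain ⟨y, rfl⟩ := hY
  simp only [TensorProduct.mk_apply, LinearMap.BilinForm.baseChange_tmul, mul_one,
    Algebra.smul_def]
  exact Subalgebra.algebraMap_mem _ _

lemma inv_two_mem_bot (h2 : IsUnit (2 : W)) : (2 : K)⁻¹ ∈ (⊥ : Subalgebra W K) := by
  obtain ⟨u, hu⟩ := h2
  exact ⟨↑u⁻¹, by rw [map_units_inv, hu, map_ofNat]⟩

lemma map_mem_bot (hσ : ∀ w, σK (algebraMap W K w) = algebraMap W K (σW w)) {r : K}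
    (hr : r ∈ (⊥ : Subalgebra W K)) : σK r ∈ (⊥ : Subalgebra W K) := by
  obtain ⟨w, rfl⟩ := Algebra.mem_bot.mp hr
  exact ⟨σW w, (hσ w).symm⟩

lemma map_mem_iotaH (hΦK : ∀ x, ΦK ((1 : K) ⊗ₜ[W] x) = (1 : K) ⊗ₜ[W] Φ x)
    {X : K ⊗[W] H} (hX : X ∈ iotaH W K H) : ΦK X ∈ iotaH W K H := by
  obtain ⟨x, rfl⟩ := hX
  exact ⟨Φ x, (hΦK x).symm⟩

lemma baseChange_map_map (hσ : ∀ w, σK (algebraMap W K w) = algebraMap W K (σW w))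
    (hΦK : ∀ x, ΦK ((1 : K) ⊗ₜ[W] x) = (1 : K) ⊗ₜ[W] Φ x)
    (hb : ∀ x y, b (Φ x) (Φ y) = (p : W) ^ 2 * σW (b x y)) (X Y : K ⊗[W] H) :
    b.baseChange K (ΦK X) (ΦK Y) = (p : K) ^ 2 * σK (b.baseChange K X Y) := by
  have hΦK' : ∀ (s : K) (x : H), ΦK (s ⊗ₜ[W] x) = σK s ⊗ₜ[W] Φ x := fun s x => by
    have hs : s ⊗ₜ[W] x = s • ((1 : K) ⊗ₜ[W] x) := by rw [smul_tmul', smul_eq_mul, mul_one]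
    rw [hs, LinearMap.map_smulₛₗ, hΦK, smul_tmul', smul_eq_mul, mul_one]
  induction X using TensorProduct.induction_on with
  | zero => simp
  | add X₁ X₂ h₁ h₂ => simp only [map_add, LinearMap.add_apply, h₁, h₂, mul_add]
  | tmul s x =>
    induction Y using TensorProduct.induction_on with
    | zero => simp
    | add Y₁ Y₂ h₁ h₂ => simp only [map_add, h₁, h₂, mul_add]
    | tmul t y =>
      simp only [hΦK', LinearMap.BilinForm.baseChange_tmul, Algebra.smul_def, hb, map_mul,
        hσ, map_pow, map_natCast]
      ring

lemma PhiTilde_eB (hp : (p : K) ≠ 0)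
    (hmap : ∀ X Y, b.baseChange K (ΦK X) (ΦK Y) = (p : K) ^ 2 * σK (b.baseChange K X Y))
    (B : K ⊗[W] H) (z : K × (K ⊗[W] H) × K) :
    PhiTilde p W K H σK ΦK (eB W K H b B z) =
      eB W K H b ((p : K)⁻¹ • ΦK B) (PhiTilde p W K H σK ΦK z) := by
  simp only [PhiTilde, eB, LinearMap.coe_mk, AddHom.coe_mk]
  refine Prod.ext rfl (Prod.ext ?_ ?_)
  · simp only [map_add, LinearMap.map_smulₛₗ, smul_smul]
    congr 2
    field_simp
  · simp only [map_add, map_mul, map_div₀, map_ofNat, map_smul, LinearMap.smul_apply,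
      smul_eq_mul, hmap]
    field_simp

lemma eB_add (h2 : (2 : K) ≠ 0) (hb : LinearMap.IsSymm b) (B₁ B₂ : K ⊗[W] H)
    (z : K × (K ⊗[W] H) × K) :
    eB W K H b (B₁ + B₂) z = eB W K H b B₁ (eB W K H b B₂ z) := by
  have hbK : b.baseChange K B₁ B₂ = b.baseChange K B₂ B₁ :=
    ((LinearMap.BilinForm.IsSymm.baseChange K hb).eq B₂ B₁).symm
  simp only [eB, LinearMap.coe_mk, AddHom.coe_mk]
  refine Prod.ext rfl (Prod.ext ?_ ?_)
  · simp only [smul_add]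
    abel
  · simp only [map_add, LinearMap.add_apply, map_smul, LinearMap.smul_apply, smul_eq_mul,
      hbK]
    field_simp
    ring

lemma baseChange_map_mem_bot
    (hσ : ∀ w, σK (algebraMap W K w) = algebraMap W K (σW w))
    (hΦK : ∀ x, ΦK ((1 : K) ⊗ₜ[W] x) = (1 : K) ⊗ₜ[W] Φ x)
    (hmap : ∀ X Y, b.baseChange K (ΦK X) (ΦK Y) = (p : K) ^ 2 * σK (b.baseChange K X Y))
    {X Y V : K ⊗[W] H} (hX : X ∈ iotaH W K H) (hY : Y ∈ iotaH W K H)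
    (hV : V ∈ iotaH W K H) :
    b.baseChange K (ΦK X) (Y + (p : K)⁻¹ • ΦK V) ∈ (⊥ : Subalgebra W K) := by
  have hpair : b.baseChange K (ΦK X) (Y + (p : K)⁻¹ • ΦK V) =
      b.baseChange K (ΦK X) Y + p * σK (b.baseChange K X V) := by
    rw [map_add, map_smul, smul_eq_mul, hmap]
    field_simp
  rw [hpair]
  exact add_mem (baseChange_mem_bot (map_mem_iotaH hΦK hX) hY)
    (mul_mem (Subalgebra.natCast_mem _ p) (map_mem_bot hσ (baseChange_mem_bot hX hV)))

lemma natCast_mul_baseChange_self_mem_bot (hp : (p : K) ≠ 0)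
    (hσ : ∀ w, σK (algebraMap W K w) = algebraMap W K (σW w))
    (hΦK : ∀ x, ΦK ((1 : K) ⊗ₜ[W] x) = (1 : K) ⊗ₜ[W] Φ x)
    (hmap : ∀ X Y, b.baseChange K (ΦK X) (ΦK Y) = (p : K) ^ 2 * σK (b.baseChange K X Y))
    {Y V : K ⊗[W] H} (hY : Y ∈ iotaH W K H) (hV : V ∈ iotaH W K H) :
    (p : K) * b.baseChange K (Y + (p : K)⁻¹ • ΦK V) (Y + (p : K)⁻¹ • ΦK V) ∈
      (⊥ : Subalgebra W K) := by
  have hΦV := map_mem_iotaH hΦK hV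
  have hexpand : (p : K) * b.baseChange K (Y + (p : K)⁻¹ • ΦK V) (Y + (p : K)⁻¹ • ΦK V) =
      p * b.baseChange K Y Y + b.baseChange K Y (ΦK V) + b.baseChange K (ΦK V) Y
        + p * σK (b.baseChange K V V) := by
    simp only [map_add, map_smul, LinearMap.add_apply, LinearMap.smul_apply, smul_eq_mul, hmap]
    field_simp
    ring
  have hp' := Subalgebra.natCast_mem (⊥ : Subalgebra W K) p
  rw [hexpand]
  exact add_mem (add_mem (add_mem (mul_mem hp' (baseChange_mem_bot hY hY))
    (baseChange_mem_bot hY hΦV)) (baseChange_mem_bot hΦV hY))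
    (mul_mem hp' (map_mem_bot hσ (baseChange_mem_bot hV hV)))

lemma eB_PhiTilde_mem_Htilde (hp : (p : K) ≠ 0) (h2 : IsUnit (2 : W))
    (hσ : ∀ w, σK (algebraMap W K w) = algebraMap W K (σW w))
    (hΦK : ∀ x, ΦK ((1 : K) ⊗ₜ[W] x) = (1 : K) ⊗ₜ[W] Φ x)
    (hmap : ∀ X Y, b.baseChange K (ΦK X) (ΦK Y) = (p : K) ^ 2 * σK (b.baseChange K X Y))
    {Y V : K ⊗[W] H} (hY : Y ∈ iotaH W K H) (hV : V ∈ iotaH W K H)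
    {y : K × (K ⊗[W] H) × K} (hy : y ∈ Htilde W K H) :
    eB W K H b (Y + (p : K)⁻¹ • ΦK V) (PhiTilde p W K H σK ΦK y) ∈ Htilde W K H := by
  obtain ⟨hy₁, hy₂, hy₃⟩ := hy
  rw [SetLike.mem_coe, mem_Wline_iff] at hy₁ hy₃
  have hp' := Subalgebra.natCast_mem (⊥ : Subalgebra W K) p
  have hσy₁ := map_mem_bot hσ hy₁
  simp only [Htilde, Submodule.mem_prod, mem_Wline_iff, eB, PhiTilde, LinearMap.coe_mk,
    AddHom.coe_mk]
  refine ⟨mul_mem hp' hσy₁, ?_, ?_⟩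
  · have hsmul :
        ((p : K) * σK y.1) • (Y + (p : K)⁻¹ • ΦK V) = σK y.1 • ((p : K) • Y + ΦK V) := by
      rw [mul_comm, mul_smul, smul_add, smul_inv_smul₀ hp]
    rw [hsmul]
    exact add_mem (map_mem_iotaH hΦK hy₂)
      (smul_mem_iotaH hσy₁ (add_mem (smul_mem_iotaH hp' hY) (map_mem_iotaH hΦK hV)))
  · set D := Y + (p : K)⁻¹ • ΦK V
    rw [show (p : K) * σK y.1 * (b.baseChange K D D / 2) =
      σK y.1 * (p * b.baseChange K D D) * 2⁻¹ by ring]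
    exact add_mem (add_mem (mul_mem hp' (map_mem_bot hσ hy₃))
      (baseChange_map_mem_bot hσ hΦK hmap hy₂ hY hV))
      (mul_mem (mul_mem hσy₁ (natCast_mul_baseChange_self_mem_bot hp hσ hΦK hmap hY hV))
        (inv_two_mem_bot h2))

end K3Crystal

namespace WittVector

lemma isUnit_two {p : ℕ} [Fact p.Prime] {k : Type*} [Field k] [CharP k p] (hp : p ≠ 2) :
    IsUnit (2 : WittVector p k) := by
  refine isUnit_of_coeff_zero_ne_zero _ ?_
  rw [← constantCoeff_apply, map_ofNat]
  exact Ring.two_ne_zero (by rwa [ringChar.eq k p])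

end WittVector

open K3Crystal in
theorem stmt15_general (p : ℕ) [Fact p.Prime] (hp : p ≠ 2)
    (k : Type*) [Field k] [CharP k p]
    (K : Type*) [Field K] [Algebra (WittVector p k) K]
    [IsFractionRing (WittVector p k) K]
    (σK : K →+* K)
    (hσK : ∀ w : WittVector p k,
      σK (algebraMap (WittVector p k) K w) =
        algebraMap (WittVector p k) K (WittVector.frobenius w))
    (n : ℕ)
    (H : Type*) [AddCommGroup H] [Module (WittVector p k) H]
    (Φ : H →ₛₗ[(WittVector.frobenius : WittVector p k →+* WittVector p k)] H)
    (b : LinearMap.BilinForm (WittVector p k) H)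
    (hsymm : ∀ x y, b x y = b y x)
    (hcrys : IsK3Crystal p WittVector.frobenius n Φ b)
    (ΦK : (K ⊗[WittVector p k] H) →ₛₗ[σK] (K ⊗[WittVector p k] H))
    (hΦK : ∀ x : H,
      ΦK ((1 : K) ⊗ₜ[WittVector p k] x) = (1 : K) ⊗ₜ[WittVector p k] (Φ x))
    (B : K ⊗[WittVector p k] H)
    (hB : IsBField p (WittVector p k) K H σK ΦK B) :
    ∀ z ∈ eBT (WittVector p k) K H b B,
      PhiTilde p (WittVector p k) K H σK ΦK z ∈ eBT (WittVector p k) K H b B := by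
  have hpK : (p : K) ≠ 0 := by
    simpa using (IsFractionRing.injective (WittVector p k) K).ne (WittVector.p_nonzero p k)
  have h2 := WittVector.isUnit_two (k := k) hp
  have h2K : (2 : K) ≠ 0 := by
    rw [← map_ofNat (algebraMap (WittVector p k) K) 2]
    exact (h2.map _).ne_zero
  have hmap := baseChange_map_map hσK hΦK hcrys.compat
  obtain ⟨-, u, v, huv⟩ := hB
  have hshift : (p : K)⁻¹ • ΦK B - B =
      -((1 : K) ⊗ₜ u) + (p : K)⁻¹ • ΦK (-((1 : K) ⊗ₜ v)) := by
    rw [← neg_sub B, huv, map_neg, smul_neg, neg_add]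
  rintro _ ⟨y, hy, rfl⟩
  refine ⟨_, eB_PhiTilde_mem_Htilde hpK h2 hσK hΦK hmap (neg_mem (tmul_mem_iotaH u))
    (neg_mem (tmul_mem_iotaH v)) hy, ?_⟩
  rw [LinearMap.restrictScalars_apply, LinearMap.restrictScalars_apply, ← hshift,
    ← eB_add h2K (LinearMap.isSymm_def.mpr hsymm), add_sub_cancel, PhiTilde_eB hpK hmap]

theorem stmt15 (p : ℕ) [Fact p.Prime] (hp : p ≠ 2)
    (k : Type*) [Field k] [IsAlgClosed k] [CharP k p]
    (K : Type*) [Field K] [Algebra (WittVector p k) K]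
    [IsFractionRing (WittVector p k) K]
    (σK : K →+* K)
    (hσK : ∀ w : WittVector p k,
      σK (algebraMap (WittVector p k) K w) =
        algebraMap (WittVector p k) K (WittVector.frobenius w))
    (n : ℕ)
    (H : Type*) [AddCommGroup H] [Module (WittVector p k) H]
    (Φ : H →ₛₗ[(WittVector.frobenius : WittVector p k →+* WittVector p k)] H)
    (b : LinearMap.BilinForm (WittVector p k) H)
    (hsymm : ∀ x y, b x y = b y x)
    (hcrys : IsK3Crystal p WittVector.frobenius n Φ b)
    (ΦK : (K ⊗[WittVector p k] H) →ₛₗ[σK] (K ⊗[WittVector p k] H))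
    (hΦK : ∀ x : H,
      ΦK ((1 : K) ⊗ₜ[WittVector p k] x) = (1 : K) ⊗ₜ[WittVector p k] (Φ x))
    (B : K ⊗[WittVector p k] H)
    (hB : IsBField p (WittVector p k) K H σK ΦK B) :
    ∀ z ∈ eBT (WittVector p k) K H b B,
      PhiTilde p (WittVector p k) K H σK ΦK z ∈ eBT (WittVector p k) K H b B :=
  stmt15_general p hp k K σK hσK n H Φ b hsymm hcrys ΦK hΦK B hB
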